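/- For τ ∈ ℝ define the explicit map Φ_τ on finitely supported v : ℤ^d → ℂ by (Φ_τ v)_k = e^{−iτ|k|²} v_k − i τ e^{−iτ|k|²} Σ_{−k₁+k₂+k₃=k} (φ₁(2iτ|k₁|²) − φ₂(2iτ|k₁|²)) conj(v_{k₁}) v_{k₂} v_{k₃} − i τ Σ_{−k₁+k₂+k₃=k} e^{−iτ(|k₁|²+|k₂|²+|k₃|²)} φ₂(2iτ|k₁|²) conj(v_{k₁}) v_{k₂} v_{k₃} − (τ²/2) e^{−iτ|k|²} Σ_{−k₁−k₂+k₃+k₄+k₅=k} conj(v_{k₁}) conj(v_{k₂}) v_{k₃} v_{k₄} v_{k₅}. Then Φ is not a symmetric method: there exist τ ∈ ℝ and a finitely supported v : ℤ^d → ℂ such that Φ_τ(Φ_{−τ}(v)) ≠ v. -/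

import Mathlib

/-- `φ₁(z) = (exp z - 1)/z` for `z ≠ 0`, `φ₁(0) = 1`. -/
noncomputable def phi1 (z : ℂ) : ℂ := if z = 0 then 1 else (Complex.exp z - 1) / z

/-- `φ₂(z) = (exp z - 1 - z)/z²` for `z ≠ 0`, `φ₂(0) = 1/2`. -/
noncomputable def phi2 (z : ℂ) : ℂ :=
  if z = 0 then 1 / 2 else (Complex.exp z - 1 - z) / z ^ 2

/-- `|k|² = k·k` for a frequency `k ∈ ℤ^d`, as a complex number. -/
noncomputable def nsq {d : ℕ} (k : Fin d → ℤ) : ℂ := ∑ i, ((k i : ℂ)) ^ 2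

/-- The explicit second-order resonance-based integrator of Bruned & Schratz (2022)
for the cubic NLS equation on `𝕋^d`, in Fourier coordinates:
`(Φ_τ v)_k = e^{-iτ|k|²} v_k
  - iτ e^{-iτ|k|²} Σ_{-k₁+k₂+k₃=k} (φ₁(2iτ|k₁|²) - φ₂(2iτ|k₁|²)) conj(v_{k₁}) v_{k₂} v_{k₃}
  - iτ Σ_{-k₁+k₂+k₃=k} e^{-iτ(|k₁|²+|k₂|²+|k₃|²)} φ₂(2iτ|k₁|²) conj(v_{k₁}) v_{k₂} v_{k₃}
  - (τ²/2) e^{-iτ|k|²} Σ_{-k₁-k₂+k₃+k₄+k₅=k} conj(v_{k₁}) conj(v_{k₂}) v_{k₃} v_{k₄} v_{k₅}`,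
where the convolution constraints have been solved as `k₃ = k + k₁ - k₂` and
`k₅ = k + k₁ + k₂ - k₃ - k₄` respectively. -/
noncomputable def brunedSchratz22 {d : ℕ} (τ : ℝ) (v : (Fin d → ℤ) → ℂ) :
    (Fin d → ℤ) → ℂ := fun k =>
  Complex.exp (-(Complex.I * (τ : ℂ) * nsq k)) * v k
    - Complex.I * (τ : ℂ) * Complex.exp (-(Complex.I * (τ : ℂ) * nsq k)) *
        (∑ᶠ k₁ : Fin d → ℤ, ∑ᶠ k₂ : Fin d → ℤ,
          (phi1 (2 * Complex.I * (τ : ℂ) * nsq k₁) -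
              phi2 (2 * Complex.I * (τ : ℂ) * nsq k₁)) *
            ((starRingEnd ℂ) (v k₁) * v k₂ * v (k + k₁ - k₂)))
    - Complex.I * (τ : ℂ) *
        (∑ᶠ k₁ : Fin d → ℤ, ∑ᶠ k₂ : Fin d → ℤ,
          Complex.exp (-(Complex.I * (τ : ℂ) * (nsq k₁ + nsq k₂ + nsq (k + k₁ - k₂)))) *
            phi2 (2 * Complex.I * (τ : ℂ) * nsq k₁) *
            ((starRingEnd ℂ) (v k₁) * v k₂ * v (k + k₁ - k₂)))
    - ((τ : ℂ) ^ 2 / 2) * Complex.exp (-(Complex.I * (τ : ℂ) * nsq k)) *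
        (∑ᶠ k₁ : Fin d → ℤ, ∑ᶠ k₂ : Fin d → ℤ, ∑ᶠ k₃ : Fin d → ℤ, ∑ᶠ k₄ : Fin d → ℤ,
          (starRingEnd ℂ) (v k₁) * (starRingEnd ℂ) (v k₂) * v k₃ * v k₄ *
            v (k + k₁ + k₂ - k₃ - k₄))

/-!
On data `c δ₀` concentrated at the zero frequency, `Φ_τ` multiplies `c` by `R_τ(|c|²)`, where
`R_τ(s) = 1 - iτs - (τs)²/2` (`zeroModeFactor`) is the second-order Taylor polynomial of the
exact phase `e^{-iτs}`. Since `|R_τ(s)|² = 1 + (τs)⁴/4`, every step with `τ ≠ 0` strictly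
increases the modulus of a nonzero zero mode, so `Φ_τ ∘ Φ_{-τ}` cannot be the identity.
-/

open Complex

noncomputable def zeroModeFactor (τ s : ℝ) : ℂ := 1 - I * τ * s - (τ * s) ^ 2 / 2

lemma normSq_zeroModeFactor (τ s : ℝ) : normSq (zeroModeFactor τ s) = 1 + (τ * s) ^ 4 / 4 := by
  rw [zeroModeFactor, normSq_apply]
  simp only [sub_re, sub_im, one_re, one_im, mul_re, mul_im, I_re, I_im, ofReal_re, ofReal_im,
    div_ofNat_re, div_ofNat_im, ← ofReal_mul, ← ofReal_pow]
  ring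

lemma nsq_zero {d : ℕ} : nsq (0 : Fin d → ℤ) = 0 := by simp [nsq]

lemma brunedSchratz22_single_zero {d : ℕ} (τ : ℝ) (c : ℂ) :
    brunedSchratz22 τ (Pi.single (0 : Fin d → ℤ) c) =
      Pi.single 0 (zeroModeFactor τ (normSq c) * c) := by
  set v : (Fin d → ℤ) → ℂ := Pi.single 0 c
  have hv0 : v 0 = c := by simp [v]
  have hsupp : ∀ x, x ≠ 0 → v x = 0 := fun x hx => by simp [v, hx]
  have hmode : ∀ k, brunedSchratz22 τ v k =
      exp (-(I * τ * nsq k)) * (zeroModeFactor τ (normSq c) * v k) := by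
    intro k
    unfold brunedSchratz22
    repeat rw [finsum_eq_single _ (0 : Fin d → ℤ) (fun x hx => by simp [hsupp x hx])]
    simp only [nsq_zero, mul_zero, zero_add, add_zero, sub_zero, phi1, phi2, if_pos, hv0, zeroModeFactor,
      normSq_eq_conj_mul_self]
    ring
  funext k
  rcases eq_or_ne k 0 with rfl | hk
  · simp [hmode, nsq_zero, hv0]
  · simp [hmode, hsupp k hk, hk]

theorem brunedSchratz22_comp_single_zero_ne {d : ℕ} {τ : ℝ} (hτ : τ ≠ 0) {c : ℂ} (hc : c ≠ 0) :
    brunedSchratz22 τ (brunedSchratz22 (-τ) (Pi.single (0 : Fin d → ℤ) c)) ≠ Pi.single 0 c := by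
  rw [brunedSchratz22_single_zero, brunedSchratz22_single_zero]
  intro h
  have h0 := congrArg normSq (congrFun h 0)
  simp only [Pi.single_eq_same, map_mul, normSq_zeroModeFactor] at h0
  have hc' : 0 < normSq c := normSq_pos.mpr hc
  have hgrow : 0 < (-τ * normSq c) ^ 4 := by
    have : -τ * normSq c ≠ 0 := mul_ne_zero (neg_ne_zero.mpr hτ) hc'.ne'
    positivity
  nlinarith [pow_nonneg (sq_nonneg (τ * ((1 + (-τ * normSq c) ^ 4 / 4) * normSq c))) 2,
    mul_pos hgrow hc']

/-- The explicit second-order resonance-based integrator 'Bruned & Schratz 2022' is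
not a symmetric method: there exist a step size `τ` and finitely supported Fourier
data `v` such that `Φ_τ(Φ_{-τ}(v)) ≠ v`. -/
theorem brunedSchratz22_not_symmetric (d : ℕ) :
    ∃ (τ : ℝ) (v : (Fin d → ℤ) →₀ ℂ),
      brunedSchratz22 τ (brunedSchratz22 (-τ) (v : (Fin d → ℤ) → ℂ)) ≠
        (v : (Fin d → ℤ) → ℂ) := by
  refine ⟨1, Finsupp.single 0 1, ?_⟩
  rw [Finsupp.single_eq_pi_single]
  exact brunedSchratz22_comp_single_zero_ne one_ne_zero one_ne_zero
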